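/- Let B = ℂ[x,y,z] be the polynomial ring in three variables and set t = x²y + z². For β ∈ ℂ, the quotient ℂ-algebra B/(x, t − β) is isomorphic to ℂ[T] × ℂ[T] (a product of two one-variable polynomial rings) if β ≠ 0, and is isomorphic to ℂ[T][ξ]/(ξ²) (in particular it is non-reduced) if β = 0. Consequently B is not isomorphic as a ℂ[x,t]-algebra to the polynomial ring ℂ[x,t][T]. -/

import Mathlib

/-!
Modulo `x` the relation `t = β` becomes `z² = β`, so `B/(x, t - β) ≅ ℂ[y][z]/(z² - β)`. For
`β = s² ≠ 0` the factors `z - s` and `z + s` are comaximal and the Chinese remainder theorem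
splits the quotient into two copies of `ℂ[y]`; for `β = 0` the class of `z` is a nonzero nilpotent.

If `B` were a polynomial ring `S[T]` over `S = ℂ[x,t]`, its fiber `B/(x, t)` over the ideal
`(x, t)` of `S` would be `(S/(x, t))[T] = ℂ[T]`, which is reduced.
-/

open MvPolynomial

/-- The subalgebra `ℂ[x,t] ⊆ ℂ[x,y,z]` generated by `x` and `t = x²y + z²`. -/
noncomputable def xtSubalgebra : Subalgebra ℂ (MvPolynomial (Fin 3) ℂ) :=
  Algebra.adjoin ℂ {X 0, (X 0) ^ 2 * X 1 + (X 2) ^ 2}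

@[simp]
theorem Ideal.Quotient.liftₐ_mk {R A B : Type*} [CommSemiring R] [Ring A] [Algebra R A]
    [Semiring B] [Algebra R B] (I : Ideal A) [I.IsTwoSided] (f : A →ₐ[R] B)
    (hI : ∀ a ∈ I, f a = 0) (a : A) :
    Ideal.Quotient.liftₐ I f hI (Ideal.Quotient.mk I a) = f a :=
  Ideal.Quotient.lift_mk I (f : A →+* B) hI

instance Polynomial.instIsReduced {R : Type*} [CommRing R] [IsReduced R] :
    IsReduced (Polynomial R) :=
  isReduced_of_injective (MvPolynomial.uniqueAlgEquiv R Unit).symm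
    (MvPolynomial.uniqueAlgEquiv R Unit).symm.injective

lemma isReduced_of_surjective_algebraMap {K A : Type*} [Field K] [CommRing A] [Algebra K A]
    (h : Function.Surjective (algebraMap K A)) : IsReduced A := by
  nontriviality A
  exact isReduced_of_injective
    (RingEquiv.ofBijective (algebraMap K A) ⟨(algebraMap K A).injective, h⟩).symm
    (RingEquiv.injective _)

lemma surjective_algebraMap_quotient_of_adjoin_eq_top {K A : Type*} [CommSemiring K]
    [CommRing A] [Algebra K A] {s : Set A} (hs : Algebra.adjoin K s = ⊤) {I : Ideal A}
    (hsI : s ⊆ I) : Function.Surjective (algebraMap K (A ⧸ I)) := by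
  have hle : Algebra.adjoin K s ≤ (⊥ : Subalgebra K (A ⧸ I)).comap (Ideal.Quotient.mkₐ K I) :=
    Algebra.adjoin_le fun a ha => by
      rw [SetLike.mem_coe, Subalgebra.mem_comap, Ideal.Quotient.mkₐ_eq_mk,
        Ideal.Quotient.eq_zero_iff_mem.2 (hsI ha)]
      exact zero_mem _
  rintro ⟨a⟩
  exact Algebra.mem_bot.1 (hle (hs ▸ Algebra.mem_top : a ∈ Algebra.adjoin K s))

theorem not_nonempty_algEquiv_polynomial_adjoin {K A : Type*} [Field K] [CommRing A]
    [Algebra K A] {s : Set A} (h : ¬ IsReduced (A ⧸ Ideal.span s)) :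
    ¬ Nonempty (A ≃ₐ[Algebra.adjoin K s] Polynomial (Algebra.adjoin K s)) := by
  rintro ⟨e⟩
  set S := Algebra.adjoin K s
  set J : Ideal S := Ideal.span (Subtype.val ⁻¹' s)
  have : IsReduced (S ⧸ J) := isReduced_of_surjective_algebraMap
    (surjective_algebraMap_quotient_of_adjoin_eq_top (K := K) Algebra.adjoin_adjoin_coe_preimage
      Ideal.subset_span)
  have hmap : (Ideal.span s).map (e : A →+* Polynomial S) = J.map Polynomial.C := by
    rw [Ideal.map_span, Ideal.map_span]
    congr 1
    ext p
    constructor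
    · rintro ⟨a, ha, rfl⟩
      exact ⟨⟨a, Algebra.subset_adjoin ha⟩, ha, (e.commutes ⟨a, _⟩).symm⟩
    · rintro ⟨r, hr, rfl⟩
      exact ⟨r, hr, e.commutes r⟩
  exact h (isReduced_of_injective
    ((Ideal.quotientEquiv _ _ e.toRingEquiv hmap.symm).trans
      (Ideal.polynomialQuotientEquivQuotientPolynomial J).symm) (RingEquiv.injective _))

namespace Polynomial

variable {A : Type*} [CommRing A]

lemma not_isReduced_quotient_span_X_sq [Nontrivial A] :
    ¬ IsReduced (A[X] ⧸ Ideal.span {(X : A[X]) ^ 2}) := by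
  intro _
  have hX : Ideal.Quotient.mk (Ideal.span {(X : A[X]) ^ 2}) X = 0 :=
    IsNilpotent.eq_zero ⟨2, by
      rw [← map_pow, Ideal.Quotient.eq_zero_iff_mem]
      exact Ideal.subset_span rfl⟩
  rw [Ideal.Quotient.eq_zero_iff_mem, Ideal.mem_span_singleton] at hX
  simpa using X_pow_dvd_iff.mp hX 1 one_lt_two

noncomputable def quotientSpanXSqSubCSqAlgEquivProd (a : A) (ha : IsUnit (2 * a)) :
    (A[X] ⧸ Ideal.span {X ^ 2 - C (a ^ 2)}) ≃ₐ[A] A × A :=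
  have hfactor : Ideal.span {X ^ 2 - C (a ^ 2)} =
      Ideal.span {X - C a} * Ideal.span {X - C (-a)} := by
    rw [Ideal.span_singleton_mul_span_singleton, C_neg, C_pow]
    ring_nf
  have hcoprime : IsCoprime (Ideal.span {X - C a}) (Ideal.span {X - C (-a)}) := by
    rw [Ideal.isCoprime_span_singleton_iff]
    exact isCoprime_X_sub_C_of_isUnit_sub (by rwa [sub_neg_eq_add, ← two_mul])
  AlgEquiv.ofRingEquiv (f := (Ideal.quotEquivOfEq hfactor).trans <|
      (Ideal.quotientMulEquivQuotientProd _ _ hcoprime).trans <|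
      RingEquiv.prodCongr (quotientSpanXSubCAlgEquiv a).toRingEquiv
        (quotientSpanXSubCAlgEquiv (-a)).toRingEquiv)
    (fun c => by
      rw [IsScalarTower.algebraMap_apply A A[X], Ideal.Quotient.algebraMap_eq, algebraMap_eq]
      ext <;> simp [Ideal.quotEquivOfEq_mk])

end Polynomial

noncomputable section Fiber

variable {R : Type*} [CommRing R] (β : R)

/-- The ideal `(x, x²y + z² - β)` of `R[x, y, z]`, with `x, y, z = X 0, X 1, X 2`. -/
def fiberIdeal : Ideal (MvPolynomial (Fin 3) R) :=
  Ideal.span {X 0, X 0 ^ 2 * X 1 + X 2 ^ 2 - C β}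

/-- `(z² - β)` in `R[y][z]`, `z` being the outer variable. -/
def sqrtIdeal : Ideal (Polynomial (Polynomial R)) :=
  Ideal.span {Polynomial.X ^ 2 - Polynomial.C (Polynomial.C β)}

lemma X_zero_mem_fiberIdeal : X 0 ∈ fiberIdeal β :=
  Ideal.subset_span (Set.mem_insert _ _)

lemma X_two_sq_sub_C_mem_fiberIdeal : X 2 ^ 2 - C β ∈ fiberIdeal β := by
  have ht : X 0 ^ 2 * X 1 + X 2 ^ 2 - C β ∈ fiberIdeal β :=
    Ideal.subset_span (Set.mem_insert_of_mem _ rfl)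
  have hx := Ideal.mul_mem_right (X 0 * X 1) _ (X_zero_mem_fiberIdeal β)
  convert sub_mem ht hx using 1
  ring

def toSqrtQuotient : MvPolynomial (Fin 3) R →ₐ[R] Polynomial (Polynomial R) ⧸ sqrtIdeal β :=
  (Ideal.Quotient.mkₐ R (sqrtIdeal β)).comp
    (aeval ![0, Polynomial.C Polynomial.X, Polynomial.X])

lemma fiberIdeal_le_ker_toSqrtQuotient : fiberIdeal β ≤ RingHom.ker (toSqrtQuotient β) := by
  refine Ideal.span_le.2 ?_
  rintro _ (rfl | rfl) <;>
    rw [SetLike.mem_coe, RingHom.mem_ker, toSqrtQuotient, AlgHom.comp_apply,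
      Ideal.Quotient.mkₐ_eq_mk, Ideal.Quotient.eq_zero_iff_mem]
  · simp
  · simp [Polynomial.algebraMap_apply]
    exact Ideal.subset_span rfl

def toFiberQuotient : Polynomial (Polynomial R) →ₐ[R] MvPolynomial (Fin 3) R ⧸ fiberIdeal β :=
  Polynomial.aevalTower (Polynomial.aeval (Ideal.Quotient.mk (fiberIdeal β) (X 1)))
    (Ideal.Quotient.mk (fiberIdeal β) (X 2))

lemma sqrtIdeal_le_ker_toFiberQuotient : sqrtIdeal β ≤ RingHom.ker (toFiberQuotient β) := by
  refine Ideal.span_le.2 ?_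
  rintro _ rfl
  rw [SetLike.mem_coe, RingHom.mem_ker, toFiberQuotient, map_sub, map_pow,
    Polynomial.aevalTower_X, Polynomial.aevalTower_C, Polynomial.aeval_C,
    ← Ideal.Quotient.mk_algebraMap, MvPolynomial.algebraMap_eq, ← map_pow, ← map_sub,
    Ideal.Quotient.eq_zero_iff_mem]
  exact X_two_sq_sub_C_mem_fiberIdeal β

def fiberToSqrt : MvPolynomial (Fin 3) R ⧸ fiberIdeal β →ₐ[R]
    Polynomial (Polynomial R) ⧸ sqrtIdeal β :=
  Ideal.Quotient.liftₐ _ (toSqrtQuotient β) fun _ ha => fiberIdeal_le_ker_toSqrtQuotient β ha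

def sqrtToFiber : Polynomial (Polynomial R) ⧸ sqrtIdeal β →ₐ[R]
    MvPolynomial (Fin 3) R ⧸ fiberIdeal β :=
  Ideal.Quotient.liftₐ _ (toFiberQuotient β) fun _ ha => sqrtIdeal_le_ker_toFiberQuotient β ha

def fiberAlgEquivSqrt :
    (MvPolynomial (Fin 3) R ⧸ fiberIdeal β) ≃ₐ[R] Polynomial (Polynomial R) ⧸ sqrtIdeal β :=
  AlgEquiv.ofAlgHom (fiberToSqrt β) (sqrtToFiber β)
    (by
      refine Ideal.Quotient.algHom_ext _ (Polynomial.algHom_ext' (Polynomial.algHom_ext ?_) ?_) <;>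
        simp [fiberToSqrt, sqrtToFiber, toSqrtQuotient, toFiberQuotient,
          -Ideal.Quotient.liftₐ_apply])
    (by
      refine Ideal.Quotient.algHom_ext _ (MvPolynomial.algHom_ext fun i => ?_)
      fin_cases i <;>
        simp [fiberToSqrt, sqrtToFiber, toSqrtQuotient, toFiberQuotient,
          -Ideal.Quotient.liftₐ_apply, Ideal.Quotient.eq_zero_iff_mem.2 (X_zero_mem_fiberIdeal β)])

def fiberZeroAlgEquiv : (MvPolynomial (Fin 3) R ⧸ fiberIdeal 0) ≃ₐ[R]
    Polynomial (Polynomial R) ⧸ Ideal.span {(Polynomial.X : Polynomial (Polynomial R)) ^ 2} :=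
  (fiberAlgEquivSqrt 0).trans (Ideal.quotientEquivAlgOfEq R (by simp [sqrtIdeal]))

lemma not_isReduced_fiber_zero [Nontrivial R] :
    ¬ IsReduced (MvPolynomial (Fin 3) R ⧸ fiberIdeal 0) := fun _ =>
  Polynomial.not_isReduced_quotient_span_X_sq
    (isReduced_of_injective (fiberZeroAlgEquiv (R := R)).symm (AlgEquiv.injective _))

lemma nonempty_fiber_algEquiv_prod {K : Type*} [Field K] [IsAlgClosed K] [NeZero (2 : K)]
    {β : K} (hβ : β ≠ 0) :
    Nonempty ((MvPolynomial (Fin 3) K ⧸ fiberIdeal β) ≃ₐ[K]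
      Polynomial K × Polynomial K) := by
  obtain ⟨s, rfl⟩ := IsAlgClosed.exists_pow_nat_eq β two_pos
  have hs : s ≠ 0 := by rintro rfl; simp at hβ
  have hunit : IsUnit (2 * Polynomial.C s) := by
    rw [← Polynomial.C_ofNat, ← Polynomial.C_mul]
    exact Polynomial.isUnit_C.2 (IsUnit.mk0 _ (mul_ne_zero two_ne_zero hs))
  have hideal : sqrtIdeal (s ^ 2) =
      Ideal.span {Polynomial.X ^ 2 - Polynomial.C (Polynomial.C s ^ 2)} := by
    rw [sqrtIdeal, map_pow]
  exact ⟨(fiberAlgEquivSqrt _).trans <| (Ideal.quotientEquivAlgOfEq K hideal).trans <|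
    (Polynomial.quotientSpanXSqSubCSqAlgEquivProd _ hunit).restrictScalars K⟩

end Fiber

set_option synthInstance.maxHeartbeats 1000000 in
theorem stmt17 :
    (∀ β : ℂ, β ≠ 0 →
      Nonempty ((MvPolynomial (Fin 3) ℂ ⧸
          Ideal.span {(X 0 : MvPolynomial (Fin 3) ℂ),
            (X 0) ^ 2 * X 1 + (X 2) ^ 2 - C β})
        ≃ₐ[ℂ] (Polynomial ℂ × Polynomial ℂ))) ∧
    (Nonempty ((MvPolynomial (Fin 3) ℂ ⧸
          Ideal.span {(X 0 : MvPolynomial (Fin 3) ℂ),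
            (X 0) ^ 2 * X 1 + (X 2) ^ 2 - C (0 : ℂ)})
        ≃ₐ[ℂ] (Polynomial (Polynomial ℂ) ⧸
            Ideal.span {(Polynomial.X : Polynomial (Polynomial ℂ)) ^ 2}))) ∧
    ¬ IsReduced (MvPolynomial (Fin 3) ℂ ⧸
        Ideal.span {(X 0 : MvPolynomial (Fin 3) ℂ),
          (X 0) ^ 2 * X 1 + (X 2) ^ 2 - C (0 : ℂ)}) ∧
    ¬ Nonempty (MvPolynomial (Fin 3) ℂ ≃ₐ[↥xtSubalgebra] Polynomial ↥xtSubalgebra) := by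
  have hnonreduced : ¬ IsReduced (MvPolynomial (Fin 3) ℂ ⧸ fiberIdeal 0) :=
    not_isReduced_fiber_zero
  refine ⟨fun β hβ => nonempty_fiber_algEquiv_prod hβ, ⟨fiberZeroAlgEquiv⟩, hnonreduced, ?_⟩
  rw [fiberIdeal, map_zero, sub_zero] at hnonreduced
  exact not_nonempty_algEquiv_polynomial_adjoin hnonreduced
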